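/- arXiv:2108.02631 — 2 statements merged into one kernel-verified Lean document; each statement's English description precedes it below -/
import Mathlib

section
/- Let r_1, r_2, r_3 be complex numbers and let R = [[1, -r_1, r_1],[0, 1-r_2, r_2],[0, 1-r_3, r_3]]. If r_3 = r_2 + x where x^2 + x + 1 = 0, then R^3 = I. -/
/-!
The matrix `R` has first column `e₁` and row sums `1`, so it fixes `e₁` and `(1, 1, 1)`; on the
quotient by these it acts by `r₃ - r₂ = x`, the determinant of its lower right `2 × 2` block.
Hence `(R - 1) (R - x) = 0`, and `R ^ 3 = 1` because `t ^ 3 - 1 = (t - 1) (t - x) (t + x + 1)`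
when `x ^ 2 + x + 1 = 0`.
-/

open Matrix Polynomial

theorem pow_three_eq_one_of_mul_sub_algebraMap_eq_zero {k A : Type*} [CommRing k] [Ring A]
    [Algebra k A] {x : k} (hx : x ^ 2 + x + 1 = 0) {M : A}
    (hM : (M - 1) * (M - algebraMap k A x) = 0) : M ^ 3 = 1 := by
  have hCx : C x ^ 2 + C x + 1 = 0 := by simpa using congrArg C hx
  have hfactor : (X ^ 3 - 1 : k[X]) = (X - 1) * (X - C x) * (X + C x + 1) := by
    linear_combination (X - 1) * hCx
  have := congrArg (aeval M) hfactor
  simp only [map_sub, map_mul, map_add, map_pow, map_one, aeval_X, aeval_C, hM, zero_mul] at this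
  exact sub_eq_zero.mp this

theorem fin_three_sub_one_mul_sub_algebraMap_eq_zero {k : Type*} [CommRing k] (a b c : k) :
    (!![1, -a, a; 0, 1 - b, b; 0, 1 - c, c] - 1) *
      (!![1, -a, a; 0, 1 - b, b; 0, 1 - c, c] - algebraMap k (Matrix (Fin 3) (Fin 3) k) (c - b))
      = 0 := by
  rw [Algebra.algebraMap_eq_smul_one, one_fin_three, eta_fin_three (0 : Matrix _ _ k)]
  simp only [smul_of, of_sub_of, smul_cons, smul_empty, cons_sub_cons, empty_sub_empty,
    mul_fin_three, smul_eq_mul, Matrix.zero_apply]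
  ring_nf

theorem stmt_2 (r₁ r₂ r₃ x : ℂ) (hx : x ^ 2 + x + 1 = 0) (h : r₃ = r₂ + x) :
    (!![1, -r₁, r₁; 0, 1 - r₂, r₂; 0, 1 - r₃, r₃] : Matrix (Fin 3) (Fin 3) ℂ) ^ 3 = 1 := by
  subst h
  have hR := fin_three_sub_one_mul_sub_algebraMap_eq_zero r₁ r₂ (r₂ + x)
  rw [add_sub_cancel_left] at hR
  exact pow_three_eq_one_of_mul_sub_algebraMap_eq_zero hx hR
end

section
/- With ω a primitive cube root of unity and (r_1, r_2) = (0,1), the matrices J = [[0,0,1],[-1,0,0],[0,1,0]] and R_1 = [[1,0,0],[0,0,1],[0,-ω,1+ω]] satisfy the relation (R_1 J)^12 = λ I for some nonzero complex scalar λ; that is, (R_1 J)^12 is a scalar matrix. -/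
/-!
The product `R₁ * J = !![0, 0, 1; 0, 1, 0; ω, 1 + ω, 0]` has characteristic polynomial
`(X - 1) * (X ^ 2 - ω)`, whose roots are sixth roots of unity once `ω ^ 3 = 1`. Concretely,
its cube is an involution, so `(R₁ * J) ^ 6 = 1` and the scalar can be taken to be `1`.
-/

open Matrix

section

variable {R : Type*} [CommRing R]

theorem R₁_mul_J_eq (ω : R) :
    !![1, 0, 0; 0, 0, 1; 0, -ω, 1 + ω] * !![0, 0, 1; -1, 0, 0; 0, 1, 0] =
      !![0, 0, 1; 0, 1, 0; ω, 1 + ω, 0] := by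
  rw [mul_fin_three]
  simp

theorem R₁J_pow_three_eq {ω : R} (hω : ω ^ 2 + ω + 1 = 0) :
    !![0, 0, 1; 0, 1, 0; ω, 1 + ω, 0] ^ 3 = !![0, 1 + ω, ω; 0, 1, 0; ω ^ 2, ω, 0] := by
  rw [pow_three, mul_fin_three, mul_fin_three]
  simp only [EmbeddingLike.apply_eq_iff_eq, vecCons_inj, and_true]
  and_intros <;> grind

theorem R₁J_cube_sq_eq_one {ω : R} (hω : ω ^ 2 + ω + 1 = 0) :
    !![0, 1 + ω, ω; 0, 1, 0; ω ^ 2, ω, 0] ^ 2 = 1 := by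
  rw [sq, mul_fin_three, one_fin_three]
  simp only [EmbeddingLike.apply_eq_iff_eq, vecCons_inj, and_true]
  and_intros <;> grind

theorem R₁J_pow_six_eq_one {ω : R} (hω : ω ^ 2 + ω + 1 = 0) :
    !![0, 0, 1; 0, 1, 0; ω, 1 + ω, 0] ^ 6 = 1 := by
  rw [show 6 = 3 * 2 from rfl, pow_mul, R₁J_pow_three_eq hω, R₁J_cube_sq_eq_one hω]

end

theorem stmt_8_general (ω : ℂ) (hω : ω ^ 2 + ω + 1 = 0) :
    let J : Matrix (Fin 3) (Fin 3) ℂ := !![0,0,1; -1,0,0; 0,1,0]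
    let R₁ : Matrix (Fin 3) (Fin 3) ℂ := !![1,0,0; 0,0,1; 0,-ω,1+ω]
    ∃ lam : ℂ, lam ≠ 0 ∧ (R₁ * J) ^ 12 = lam • (1 : Matrix (Fin 3) (Fin 3) ℂ) := by
  intro J R₁
  refine ⟨1, one_ne_zero, ?_⟩
  rw [R₁_mul_J_eq, show 12 = 6 * 2 from rfl, pow_mul, R₁J_pow_six_eq_one hω, one_pow, one_smul]

theorem stmt_8 (ω : ℂ) (hω : ω ^ 2 + ω + 1 = 0) (hω1 : ω ≠ 1) :
    let J : Matrix (Fin 3) (Fin 3) ℂ := !![0,0,1; -1,0,0; 0,1,0]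
    let R₁ : Matrix (Fin 3) (Fin 3) ℂ := !![1,0,0; 0,0,1; 0,-ω,1+ω]
    ∃ lam : ℂ, lam ≠ 0 ∧ (R₁ * J) ^ 12 = lam • (1 : Matrix (Fin 3) (Fin 3) ℂ) :=
  stmt_8_general ω hω
end
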